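/- Let N ≥ 1 and let F = ((a_i),(b_i)) ∈ Faisc^N(ℝ²) be an N-beam. Then M_R(F) := (M(F), (A(a_j − b_j))_{1≤j≤N}) is an N-reflexive polygonal chain, i.e., M_R(F) ∈ LR^N(ℝ²): the centered chain M(F) = P_{1/2} belongs to LO^N(ℝ²), and for every 1 ≤ j ≤ N the dot products (P_{j+1}^{1/2} − P_j^{1/2})·n(θ_j) and (P_{j−1}^{1/2} − P_j^{1/2})·n(θ_j) are nonzero and of the same sign, where θ_j = A(a_j − b_j). -/

import Mathlib

open Real Set
open scoped Classical

noncomputable section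

abbrev Pt : Type := EuclideanSpace ℝ (Fin 2)

noncomputable def pt (x y : ℝ) : Pt := (WithLp.equiv 2 (Fin 2 → ℝ)).symm ![x, y]

def dot (u v : Pt) : ℝ := u 0 * v 0 + u 1 * v 1

noncomputable def nvec (θ : Real.Angle) : Pt := pt (-θ.sin) θ.cos

noncomputable def dirvec (θ : Real.Angle) : Pt := pt θ.cos θ.sin

noncomputable def angleOf (v : Pt) : Real.Angle := ((Complex.arg ⟨v 0, v 1⟩ : ℝ) : Real.Angle)

/-- The space of `N`-polygonal chains `(ℝ²)^{N+2}`. -/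
abbrev Chain (N : ℕ) := Fin (N + 2) → Pt

/-- Access the `i`-th point of a chain (junk value `0` out of range). -/
def cg {N : ℕ} (c : Chain N) (i : ℕ) : Pt := if h : i < N + 2 then c ⟨i, h⟩ else 0

/-- The `j`-th ray of a chain: `R_0 = (c_0,c_1]`, `R_j = [c_j, c_{j+1}]`. -/
def ray {N : ℕ} (c : Chain N) (j : ℕ) : Set Pt :=
  if j = 0 then segment ℝ (cg c 0) (cg c 1) \ {cg c 0}
  else segment ℝ (cg c j) (cg c (j + 1))

def Obscured {N : ℕ} (c : Chain N) : Prop :=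
  cg c 0 = cg c 1 ∨
    ∃ j k : ℕ, j ≤ N ∧ 1 ≤ k ∧ k ≤ N + 1 ∧ k ≠ j ∧ k ≠ j + 1 ∧ cg c k ∈ ray c j

def Grazing {N : ℕ} (c : Chain N) : Prop :=
  ∃ i : ℕ, 1 ≤ i ∧ i ≤ N ∧ cg c i ∈ openSegment ℝ (cg c (i - 1)) (cg c (i + 1))

/-- Obscuration-free, non-grazing chains. -/
def LO (N : ℕ) : Set (Chain N) := {c | ¬Obscured c ∧ ¬Grazing c}

/-- Access the angle of the `j`-th mirror, `1 ≤ j ≤ N` (junk out of range). -/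
def θg {N : ℕ} (θ : Fin N → Real.Angle) (j : ℕ) : Real.Angle :=
  if h : j - 1 < N then θ ⟨j - 1, h⟩ else 0

/-- Reflexion condition: at each mirror both adjacent dot products with `n(θ_j)`
are nonzero and of the same sign. -/
def IsReflexive {N : ℕ} (c : Chain N) (θ : Fin N → Real.Angle) : Prop :=
  ∀ j : ℕ, 1 ≤ j → j ≤ N →
    0 < dot (cg c (j + 1) - cg c j) (nvec (θg θ j)) *
        dot (cg c (j - 1) - cg c j) (nvec (θg θ j))

abbrev RChain (N : ℕ) := Chain N × (Fin N → Real.Angle)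

/-- The space of reflexive polygonal chains. -/
def LR (N : ℕ) : Set (RChain N) := {L | L.1 ∈ LO N ∧ IsReflexive L.1 L.2}

/-- The open arc `α + ε·(0,π)` in `ℝ/2πℤ`. -/
def arc (α : Real.Angle) (ε : ℤ) : Set Real.Angle :=
  {β | ∃ s : ℝ, 0 < s ∧ s < π ∧ β = α + (((ε : ℝ) * s : ℝ) : Real.Angle)}

/-- Positive orientation set of the `j`-th mirror. -/
def APlus {N : ℕ} (c : Chain N) (j : ℕ) : Set Real.Angle :=
  arc (angleOf (cg c j - cg c (j - 1))) ((-1) ^ j) ∩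
    arc (angleOf (cg c j - cg c (j + 1))) ((-1) ^ j)

/-- Negative orientation set of the `j`-th mirror. -/
def AMinus {N : ℕ} (c : Chain N) (j : ℕ) : Set Real.Angle :=
  arc (angleOf (cg c j - cg c (j - 1))) ((-1) ^ (j + 1)) ∩
    arc (angleOf (cg c j - cg c (j + 1))) ((-1) ^ (j + 1))

/-- The characteristic: index `j : Fin N` corresponds to the `(j+1)`-st mirror. -/
noncomputable def Car {N : ℕ} (L : RChain N) : Fin N → ℤ :=
  fun j => if θg L.2 (j.1 + 1) ∈ APlus L.1 (j.1 + 1) then 1 else -1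

abbrev Beam (N : ℕ) := Chain N × Chain N

def IsPrimaryBeam {N : ℕ} (F : Beam N) : Prop :=
  (∀ k : ℕ, 1 ≤ k → k ≤ N → cg F.1 k ≠ cg F.2 k) ∧
  cg F.1 0 = pt (-1) 0 ∧ cg F.2 0 = pt (-1) 0 ∧
  cg F.1 (N + 1) = cg F.2 (N + 1) ∧
  midpoint ℝ (cg F.1 1) (cg F.2 1) = pt 0 0

def lineThrough (p q : Pt) : Set Pt := {x | ∃ u : ℝ, x = p + u • (q - p)}

noncomputable def pickPt (S : Set Pt) : Pt := if h : S.Nonempty then h.choose else 0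

noncomputable def pickR (S : Set ℝ) : ℝ := if h : S.Nonempty then h.choose else 0

/-- `impact F t k` is the `(k+1)`-st impact point `P_{k+1}^t` of the `t`-polygonal chain. -/
noncomputable def impact {N : ℕ} (F : Beam N) (t : ℝ) : ℕ → Pt
  | 0 => (1 - t) • cg F.1 1 + t • cg F.2 1
  | k + 1 =>
    let i := k + 2
    let prev := impact F t k
    if (lineThrough (cg F.1 (i - 1)) (cg F.1 i) ∩
        lineThrough (cg F.2 (i - 1)) (cg F.2 i)).Nonempty then
      pickPt (lineThrough prev
          (pickPt (lineThrough (cg F.1 (i - 1)) (cg F.1 i) ∩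
            lineThrough (cg F.2 (i - 1)) (cg F.2 i))) ∩
        segment ℝ (cg F.1 i) (cg F.2 i))
    else
      (1 - pickR {l : ℝ | prev = (1 - l) • cg F.1 (i - 1) + l • cg F.2 (i - 1)}) • cg F.1 i +
        pickR {l : ℝ | prev = (1 - l) • cg F.1 (i - 1) + l • cg F.2 (i - 1)} • cg F.2 i

/-- The `t`-polygonal chain `P_t` of a (primary) beam. -/
noncomputable def tChain {N : ℕ} (F : Beam N) (t : ℝ) : Chain N :=
  fun i => if (i : ℕ) = 0 then impact F t 0 + pt (-1) 0 else impact F t ((i : ℕ) - 1)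

/-- The `k`-th mirror `S_k = [a_k, b_k]` of a beam. -/
def mirror {N : ℕ} (F : Beam N) (k : ℕ) : Set Pt := segment ℝ (cg F.1 k) (cg F.2 k)

def NonObscuration {N : ℕ} (F : Beam N) : Prop :=
  ∀ j : ℕ, j ≤ N → ∀ t ∈ Icc (0 : ℝ) 1, ∀ k : ℕ,
    1 ≤ k → k ≤ N + 1 → k ≠ j → k ≠ j + 1 → ray (tChain F t) j ∩ mirror F k = ∅

/-- Four reals are nonzero and of the same sign. -/
def SameSign₄ (x y z w : ℝ) : Prop := 0 < x * y ∧ 0 < x * z ∧ 0 < x * w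

/-- A unit normal vector to the direction `u`. -/
noncomputable def normalOf (u : Pt) : Pt := ‖u‖⁻¹ • pt (-u 1) (u 0)

def ReflexionCond {N : ℕ} (F : Beam N) : Prop :=
  ∀ i : ℕ, 1 ≤ i → i ≤ N →
    SameSign₄
      (dot (cg F.1 (i - 1) - cg F.1 i) (normalOf (cg F.2 i - cg F.1 i)))
      (dot (cg F.2 (i - 1) - cg F.2 i) (normalOf (cg F.2 i - cg F.1 i)))
      (dot (cg F.1 (i + 1) - cg F.1 i) (normalOf (cg F.2 i - cg F.1 i)))
      (dot (cg F.2 (i + 1) - cg F.2 i) (normalOf (cg F.2 i - cg F.1 i)))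

/-- The space of `N`-beams. -/
def Faisc (N : ℕ) : Set (Beam N) :=
  {F | IsPrimaryBeam F ∧ NonObscuration F ∧ ReflexionCond F}

/-- The centered polygonal chain `M(F) = P_{1/2}`. -/
noncomputable def MF {N : ℕ} (F : Beam N) : Chain N := tChain F (1 / 2)

/-- The reflexive polygonal chain induced by a beam. -/
noncomputable def MR {N : ℕ} (F : Beam N) : RChain N :=
  (MF F, fun j => angleOf (cg F.1 (j.1 + 1) - cg F.2 (j.1 + 1)))

/-- The characteristic of a beam. -/
noncomputable def CarF {N : ℕ} (F : Beam N) : Fin N → ℤ := Car (MR F)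

/-- The pair of polygonal chains `P_l(L)` built from a reflexive chain and mirror
half-lengths `la, lb` (indexed by `1 ≤ j ≤ N`). -/
noncomputable def Pl {N : ℕ} (L : RChain N) (la lb : ℕ → ℝ) : Beam N :=
  (fun i => if 1 ≤ (i : ℕ) ∧ (i : ℕ) ≤ N
      then L.1 i + la (i : ℕ) • dirvec (θg L.2 (i : ℕ)) else L.1 i,
   fun i => if 1 ≤ (i : ℕ) ∧ (i : ℕ) ≤ N
      then L.1 i - lb (i : ℕ) • dirvec (θg L.2 (i : ℕ)) else L.1 i)

/-- Minimal mirror-to-mirror distance of a reflexive chain. -/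
noncomputable def dR {N : ℕ} (L : RChain N) : ℝ :=
  sInf {r | ∃ i : ℕ, 1 ≤ i ∧ i ≤ N ∧
    r = min |dot (cg L.1 (i - 1) - cg L.1 i) (nvec (θg L.2 i))|
          |dot (cg L.1 (i + 1) - cg L.1 i) (nvec (θg L.2 i))|}

/-- Minimal distance from the non-adjacent mirrors to the rays. -/
noncomputable def dO {N : ℕ} (L : RChain N) : ℝ :=
  sInf {r | ∃ j k : ℕ, j ≤ N ∧ 1 ≤ k ∧ k ≤ N + 1 ∧ k ≠ j ∧ k ≠ j + 1 ∧
    r = Metric.infDist (cg L.1 k) (ray L.1 j)}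

/-- `K = max_{1 ≤ j ≤ N} max (la j) (lb j)`. -/
noncomputable def Kmax (N : ℕ) (la lb : ℕ → ℝ) : ℝ :=
  sSup {r | ∃ j : ℕ, 1 ≤ j ∧ j ≤ N ∧ r = max (la j) (lb j)}

/-- The subbeam `F_μ` of a beam. -/
noncomputable def subBeam {N : ℕ} (F : Beam N) (μ : ℝ) : Beam N :=
  (fun i => if (i : ℕ) = 0 then pt (-1) 0 else tChain F ((1 - μ) / 2) i,
   fun i => if (i : ℕ) = 0 then pt (-1) 0 else tChain F ((1 + μ) / 2) i)

section Helpers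

lemma pt_zero : pt 0 0 = (0 : Pt) := by ext i; fin_cases i <;> rfl

lemma dot_sub_left (x y n : Pt) : dot (x - y) n = dot x n - dot y n := by
  simp [dot]; ring
lemma dot_add_left (x y n : Pt) : dot (x + y) n = dot x n + dot y n := by
  simp [dot]; ring
lemma dot_smul_left (r : ℝ) (x n : Pt) : dot (r • x) n = r * dot x n := by
  simp [dot]; ring
lemma dot_zero_left (n : Pt) : dot 0 n = 0 := by simp [dot]

lemma dot_normalOf (u w : Pt) : dot w (normalOf u) = ‖u‖⁻¹ * (u 0 * w 1 - u 1 * w 0) := by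
  simp [dot, normalOf, pt]; ring
lemma dot_normalOf_self (u : Pt) : dot u (normalOf u) = 0 := by rw [dot_normalOf]; ring

lemma norm_pt (v : Pt) : ‖v‖ = Real.sqrt (v 0 ^ 2 + v 1 ^ 2) := by
  rw [EuclideanSpace.norm_eq]; simp [Fin.sum_univ_two, sq_abs]

lemma pt_eq_zero_iff (v : Pt) : v = 0 ↔ v 0 = 0 ∧ v 1 = 0 := by
  constructor
  · intro h; rw [h]; simp
  · rintro ⟨h0, h1⟩; ext i; fin_cases i <;> simpa

lemma dot_nvec_angleOf (v w : Pt) (hv : v ≠ 0) :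
    dot w (nvec (angleOf v)) = ‖v‖⁻¹ * (v 0 * w 1 - v 1 * w 0) := by
  have hz : (⟨v 0, v 1⟩ : ℂ) ≠ 0 := by
    intro h
    rw [Complex.ext_iff] at h
    exact hv ((pt_eq_zero_iff v).mpr ⟨h.1, h.2⟩)
  have habs : ‖(⟨v 0, v 1⟩ : ℂ)‖ = ‖v‖ := by
    rw [Complex.norm_def, Complex.normSq_mk, norm_pt]; ring_nf
  have hs : (angleOf v).sin = v 1 / ‖v‖ := by
    rw [angleOf, Real.Angle.sin_coe, Complex.sin_arg, habs]
  have hc : (angleOf v).cos = v 0 / ‖v‖ := by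
    rw [angleOf, Real.Angle.cos_coe, Complex.cos_arg hz, habs]
  simp [dot, nvec, pt, hs, hc]; ring

lemma prod_nvec_eq (v p q : Pt) (hv : v ≠ 0) :
    dot p (nvec (angleOf v)) * dot q (nvec (angleOf v)) =
      dot p (normalOf (-v)) * dot q (normalOf (-v)) := by
  rw [dot_nvec_angleOf _ _ hv, dot_nvec_angleOf _ _ hv, dot_normalOf, dot_normalOf]
  simp; ring

lemma convex_pos {α β z w : ℝ} (hα : 0 ≤ α) (hβ : 0 ≤ β) (hαβ : α + β = 1)
    (hz : 0 < z) (hw : 0 < w) : 0 < α * z + β * w := by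
  rcases eq_or_lt_of_le hα with h | h
  · have hβ1 : β = 1 := by linarith
    rw [← h, hβ1]; simpa using hw
  · nlinarith [mul_nonneg hβ hw.le]

lemma combo_pos {x y z w α β γ δ : ℝ} (hxy : 0 < x * y) (hxz : 0 < x * z) (hxw : 0 < x * w)
    (hα : 0 ≤ α) (hβ : 0 ≤ β) (hαβ : α + β = 1)
    (hγ : 0 ≤ γ) (hδ : 0 ≤ δ) (hγδ : γ + δ = 1) :
    0 < (α * z + β * w) * (γ * x + δ * y) := by
  rcases mul_pos_iff.mp hxz with ⟨hx, hzp⟩ | ⟨hx, hzn⟩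
  · rcases mul_pos_iff.mp hxy with ⟨_, hy⟩ | ⟨hx', _⟩
    · rcases mul_pos_iff.mp hxw with ⟨_, hw⟩ | ⟨hx', _⟩
      · exact mul_pos (convex_pos hα hβ hαβ hzp hw) (convex_pos hγ hδ hγδ hx hy)
      · linarith
    · linarith
  · rcases mul_pos_iff.mp hxy with ⟨hx', _⟩ | ⟨_, hy⟩
    · linarith
    · rcases mul_pos_iff.mp hxw with ⟨hx', _⟩ | ⟨_, hw⟩
      · linarith
      · have h1 : 0 < α * (-z) + β * (-w) := convex_pos hα hβ hαβ (by linarith) (by linarith)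
        have h2 : 0 < γ * (-x) + δ * (-y) := convex_pos hγ hδ hγδ (by linarith) (by linarith)
        nlinarith

lemma pickPt_mem {S : Set Pt} (h : S.Nonempty) : pickPt S ∈ S := by
  rw [pickPt, dif_pos h]; exact h.choose_spec
lemma pickPt_eq_zero {S : Set Pt} (h : ¬S.Nonempty) : pickPt S = 0 := by
  rw [pickPt, dif_neg h]
lemma pickR_mem {S : Set ℝ} (h : S.Nonempty) : pickR S ∈ S := by
  rw [pickR, dif_pos h]; exact h.choose_spec

lemma cg_eq {N : ℕ} (c : Chain N) (k : ℕ) (h : k < N + 2) : cg c k = c ⟨k, h⟩ := dif_pos h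

lemma cg_tChain_zero {N : ℕ} (F : Beam N) (t : ℝ) :
    cg (tChain F t) 0 = impact F t 0 + pt (-1) 0 := by
  rw [cg_eq _ _ (by omega)]; rfl

lemma cg_tChain {N : ℕ} (F : Beam N) (t : ℝ) (k : ℕ) (h1 : 1 ≤ k) (h2 : k ≤ N + 1) :
    cg (tChain F t) k = impact F t (k - 1) := by
  rw [cg_eq _ _ (by omega)]
  show (if k = 0 then _ else impact F t (k - 1)) = _
  rw [if_neg (by omega)]

lemma impact_succ {N : ℕ} (F : Beam N) (t : ℝ) (k : ℕ) :
    impact F t (k + 1) =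
    if (lineThrough (cg F.1 (k + 1)) (cg F.1 (k + 2)) ∩
        lineThrough (cg F.2 (k + 1)) (cg F.2 (k + 2))).Nonempty then
      pickPt (lineThrough (impact F t k)
          (pickPt (lineThrough (cg F.1 (k + 1)) (cg F.1 (k + 2)) ∩
            lineThrough (cg F.2 (k + 1)) (cg F.2 (k + 2)))) ∩
        segment ℝ (cg F.1 (k + 2)) (cg F.2 (k + 2)))
    else
      (1 - pickR {l : ℝ | impact F t k = (1 - l) • cg F.1 (k + 1) + l • cg F.2 (k + 1)}) • cg F.1 (k + 2) +
        pickR {l : ℝ | impact F t k = (1 - l) • cg F.1 (k + 1) + l • cg F.2 (k + 1)} • cg F.2 (k + 2) := rfl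

lemma impact_mem {N : ℕ} (hN : 1 ≤ N) (F : Beam N) (hF : F ∈ Faisc N) :
    ∀ m : ℕ, m + 1 ≤ N + 1 → impact F (1/2) m ∈ mirror F (m + 1) := by
  obtain ⟨hPB, hNO, hRC⟩ := hF
  intro m
  induction m with
  | zero =>
    intro _
    show (1 - (1/2:ℝ)) • cg F.1 1 + (1/2:ℝ) • cg F.2 1 ∈ segment ℝ (cg F.1 1) (cg F.2 1)
    exact ⟨1 - 1/2, 1/2, by norm_num, by norm_num, by norm_num, rfl⟩
  | succ m IH =>
    intro hm
    have hprev : impact F (1/2) m ∈ segment ℝ (cg F.1 (m+1)) (cg F.2 (m+1)) := IH (by omega)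
    by_cases hline : (lineThrough (cg F.1 (m + 1)) (cg F.1 (m + 2)) ∩
        lineThrough (cg F.2 (m + 1)) (cg F.2 (m + 2))).Nonempty
    · have hval : impact F (1/2) (m+1) = pickPt (lineThrough (impact F (1/2) m)
          (pickPt (lineThrough (cg F.1 (m + 1)) (cg F.1 (m + 2)) ∩
            lineThrough (cg F.2 (m + 1)) (cg F.2 (m + 2)))) ∩
          segment ℝ (cg F.1 (m + 2)) (cg F.2 (m + 2))) := by
        rw [impact_succ, if_pos hline]
      by_cases hS : (lineThrough (impact F (1/2) m)
          (pickPt (lineThrough (cg F.1 (m + 1)) (cg F.1 (m + 2)) ∩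
            lineThrough (cg F.2 (m + 1)) (cg F.2 (m + 2)))) ∩
          segment ℝ (cg F.1 (m + 2)) (cg F.2 (m + 2))).Nonempty
      · rw [hval]
        show _ ∈ segment ℝ (cg F.1 (m+2)) (cg F.2 (m+2))
        exact (pickPt_mem hS).2
      · exfalso
        have h0 : impact F (1/2) (m+1) = 0 := by rw [hval, pickPt_eq_zero hS]
        have hmir1 : (0 : Pt) ∈ mirror F 1 := by
          rw [← pt_zero, ← hPB.2.2.2.2]; exact midpoint_mem_segment _ _
        have hhalf : (1/2 : ℝ) ∈ Icc (0:ℝ) 1 := by norm_num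
        cases m with
        | succ m' =>
          have hray := hNO (m'+2) (by omega) (1/2) hhalf 1 le_rfl (by omega) (by omega) (by omega)
          rw [eq_empty_iff_forall_notMem] at hray
          refine hray 0 ⟨?_, hmir1⟩
          rw [ray, if_neg (by omega)]
          have h2 : cg (tChain F (1/2)) (m'+2+1) = (0:Pt) := by
            rw [cg_tChain F (1/2) (m'+3) (by omega) (by omega)]
            exact h0
          rw [← h2]
          exact right_mem_segment ℝ _ _
        | zero =>
          rcases Nat.lt_or_ge N 2 with hN2 | hN2
          ·
            have hN1 : N = 1 := by omega
            subst hN1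
            simp only [Nat.zero_add] at hline hS
            obtain ⟨⟨u, hu⟩, ⟨sv, hsv⟩⟩ := pickPt_mem hline
            set m₀ := pickPt (lineThrough (cg F.1 1) (cg F.1 2) ∩
              lineThrough (cg F.2 1) (cg F.2 2)) with hm₀
            apply hS
            have h22 : cg F.1 2 = cg F.2 2 := hPB.2.2.2.1
            have hab1 : cg F.1 1 ≠ cg F.2 1 := hPB.1 1 le_rfl le_rfl
            obtain ⟨hxy, hxz, hxw⟩ := hRC 1 le_rfl le_rfl
            norm_num at hxy hxz hxw
            set nn := normalOf (cg F.2 1 - cg F.1 1) with hnn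
            have hperp : dot (cg F.2 1) nn - dot (cg F.1 1) nn = 0 := by
              rw [← dot_sub_left]; exact dot_normalOf_self _
            have hz2 : dot (cg F.1 2) nn - dot (cg F.1 1) nn ≠ 0 := by
              rw [← dot_sub_left]
              intro h; rw [h, mul_zero] at hxz; exact lt_irrefl 0 hxz
            rw [← h22] at hsv
            have hu' : dot m₀ nn = dot (cg F.1 1) nn +
                u * (dot (cg F.1 2) nn - dot (cg F.1 1) nn) := by
              rw [hu, dot_add_left, dot_smul_left, dot_sub_left]
            have hs' : dot m₀ nn = dot (cg F.2 1) nn +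
                sv * (dot (cg F.1 2) nn - dot (cg F.2 1) nn) := by
              rw [hsv, dot_add_left, dot_smul_left, dot_sub_left]
            have hmul : u * (dot (cg F.1 2) nn - dot (cg F.1 1) nn) =
                sv * (dot (cg F.1 2) nn - dot (cg F.1 1) nn) := by
              linear_combination hs' - hu' + (1 - sv) * hperp
            have hus : u = sv := mul_right_cancel₀ hz2 hmul
            have hvz : (1 - u) • (cg F.1 1 - cg F.2 1) = 0 := by
              have h := hu.symm.trans hsv
              rw [← hus] at h
              linear_combination (norm := module) h
            have hu1 : u = 1 := by
              rcases smul_eq_zero.mp hvz with h | h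
              · linarith
              · exact absurd (sub_eq_zero.mp h) hab1
            have hm₀2 : m₀ = cg F.1 2 := by
              rw [hu, hu1, one_smul]; abel
            refine ⟨cg F.1 2, ⟨⟨1, ?_⟩, left_mem_segment ℝ _ _⟩⟩
            rw [hm₀2, one_smul]
            abel
          · -- N ≥ 2 : use the ray starting at point index 2
            have hray := hNO 2 (by omega) (1/2) hhalf 1 le_rfl (by omega) (by omega) (by omega)
            rw [eq_empty_iff_forall_notMem] at hray
            refine hray 0 ⟨?_, hmir1⟩
            rw [ray, if_neg (by omega)]
            have h2 : cg (tChain F (1/2)) 2 = (0:Pt) := by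
              rw [cg_tChain F (1/2) 2 (by omega) (by omega)]
              exact h0
            rw [← h2]
            exact left_mem_segment ℝ _ _
    · have hval : impact F (1/2) (m+1) =
          (1 - pickR {l : ℝ | impact F (1/2) m = (1 - l) • cg F.1 (m + 1) + l • cg F.2 (m + 1)}) • cg F.1 (m + 2) +
            pickR {l : ℝ | impact F (1/2) m = (1 - l) • cg F.1 (m + 1) + l • cg F.2 (m + 1)} • cg F.2 (m + 2) := by
        rw [impact_succ, if_neg hline]
      obtain ⟨α, β, hα, hβ, hαβ, hx⟩ := hprev
      have hT : β ∈ {l : ℝ | impact F (1/2) m = (1 - l) • cg F.1 (m + 1) + l • cg F.2 (m + 1)} := by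
        show impact F (1/2) m = _
        rw [← hx, show (1:ℝ) - β = α by linarith]
      have hmemT := pickR_mem ⟨β, hT⟩
      have hab : cg F.1 (m+1) ≠ cg F.2 (m+1) := hPB.1 (m+1) (by omega) (by omega)
      have huniq : pickR {l : ℝ | impact F (1/2) m = (1 - l) • cg F.1 (m + 1) + l • cg F.2 (m + 1)} = β := by
        set r := pickR {l : ℝ | impact F (1/2) m = (1 - l) • cg F.1 (m + 1) + l • cg F.2 (m + 1)} with hr
        have h1 : impact F (1/2) m = (1 - r) • cg F.1 (m+1) + r • cg F.2 (m+1) := hmemT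
        have h2 : impact F (1/2) m = (1 - β) • cg F.1 (m+1) + β • cg F.2 (m+1) := hT
        have hv : (r - β) • (cg F.2 (m+1) - cg F.1 (m+1)) = 0 := by
          linear_combination (norm := module) h2 - h1
        rcases smul_eq_zero.mp hv with h | h
        · linarith [sub_eq_zero.mp h]
        · exact absurd (sub_eq_zero.mp h).symm hab
      rw [hval, huniq]
      show _ ∈ segment ℝ (cg F.1 (m+2)) (cg F.2 (m+2))
      exact ⟨1 - β, β, by linarith, hβ, by ring, rfl⟩

lemma cg_mem_mirror {N : ℕ} (hN : 1 ≤ N) (F : Beam N) (hF : F ∈ Faisc N) (k : ℕ)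
    (h1 : 1 ≤ k) (h2 : k ≤ N + 1) :
    cg (tChain F (1/2)) k ∈ segment ℝ (cg F.1 k) (cg F.2 k) := by
  have h := impact_mem hN F hF (k - 1) (by omega)
  rw [Nat.sub_add_cancel h1] at h
  rw [cg_tChain F (1/2) k h1 h2]
  exact h

lemma reflex_core {N : ℕ} (hN : 1 ≤ N) (F : Beam N) (hF : F ∈ Faisc N) (j : ℕ)
    (h1 : 1 ≤ j) (h2 : j ≤ N) :
    0 < dot (cg (tChain F (1/2)) (j+1) - cg (tChain F (1/2)) j)
          (normalOf (cg F.2 j - cg F.1 j)) *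
        dot (cg (tChain F (1/2)) (j-1) - cg (tChain F (1/2)) j)
          (normalOf (cg F.2 j - cg F.1 j)) := by
  obtain ⟨hxy, hxz, hxw⟩ := hF.2.2 j h1 h2
  set nn := normalOf (cg F.2 j - cg F.1 j) with hnn
  have hperp : dot (cg F.2 j) nn - dot (cg F.1 j) nn = 0 := by
    rw [← dot_sub_left]; exact dot_normalOf_self _
  obtain ⟨α, β, hα, hβ, hαβ, hxj⟩ := cg_mem_mirror hN F hF j h1 (by omega)
  obtain ⟨γ, δ, hγ, hδ, hγδ, hxj1⟩ := cg_mem_mirror hN F hF (j+1) (by omega) (by omega)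
  have hcj : dot (cg (tChain F (1/2)) j) nn = dot (cg F.1 j) nn := by
    rw [← hxj, dot_add_left, dot_smul_left, dot_smul_left]
    linear_combination dot (cg F.1 j) nn * hαβ + β * hperp
  have hP : dot (cg (tChain F (1/2)) (j+1) - cg (tChain F (1/2)) j) nn =
      γ * dot (cg F.1 (j+1) - cg F.1 j) nn + δ * dot (cg F.2 (j+1) - cg F.2 j) nn := by
    rw [dot_sub_left, ← hxj1, dot_add_left, dot_smul_left, dot_smul_left, hcj,
        dot_sub_left, dot_sub_left]
    linear_combination dot (cg F.1 j) nn * hγδ + δ * hperp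
  rcases eq_or_lt_of_le h1 with hj1 | hj1
  · -- j = 1
    have hj : j = 1 := hj1.symm
    subst hj
    have hsub : cg (tChain F (1/2)) 0 - cg (tChain F (1/2)) 1 = pt (-1) 0 := by
      rw [cg_tChain_zero, cg_tChain F (1/2) 1 le_rfl (by omega)]
      abel
    have ha0 : cg F.1 0 = pt (-1) 0 := hF.1.2.1
    have ha1 : dot (cg F.1 1) nn = 0 := by
      have hmid := hF.1.2.2.2.2
      have h := congrArg (fun x => dot x nn) hmid
      simp only [midpoint_eq_smul_add, dot_smul_left, dot_add_left, invOf_eq_inv,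
        pt_zero, dot_zero_left] at h
      have h2 : dot (cg F.1 1) nn + dot (cg F.2 1) nn = 0 := by
        field_simp at h
        linarith
      linarith [hperp]
    have hQ : dot (cg (tChain F (1/2)) (1-1) - cg (tChain F (1/2)) 1) nn =
        dot (cg F.1 (1-1) - cg F.1 1) nn := by
      show dot (cg (tChain F (1/2)) 0 - cg (tChain F (1/2)) 1) nn = dot (cg F.1 0 - cg F.1 1) nn
      rw [hsub, dot_sub_left, ha0, ha1]
      ring
    rw [hP, hQ]
    have hc := combo_pos hxy hxz hxw hγ hδ hγδ zero_le_one le_rfl (by norm_num)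
    nlinarith [hc]
  · -- j ≥ 2
    obtain ⟨γ', δ', hγ', hδ', hγδ', hxjm⟩ := cg_mem_mirror hN F hF (j-1) (by omega) (by omega)
    have hQ : dot (cg (tChain F (1/2)) (j-1) - cg (tChain F (1/2)) j) nn =
        γ' * dot (cg F.1 (j-1) - cg F.1 j) nn + δ' * dot (cg F.2 (j-1) - cg F.2 j) nn := by
      rw [dot_sub_left, ← hxjm, dot_add_left, dot_smul_left, dot_smul_left, hcj,
          dot_sub_left, dot_sub_left]
      linear_combination dot (cg F.1 j) nn * hγδ' + δ' * hperp
    rw [hP, hQ]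
    exact combo_pos hxy hxz hxw hγ hδ hγδ hγ' hδ' hγδ'

end Helpers

/-- `M_R(F)` is a reflexive polygonal chain: `M(F) ∈ LO^N` and the
reflexion condition holds at each mirror with `θ_j = A(a_j - b_j)`. -/
theorem statement8 (N : ℕ) (hN : 1 ≤ N) (F : Beam N) (hF : F ∈ Faisc N) :
    MR F ∈ LR N := by
  have hNO := hF.2.1
  refine ⟨⟨?_, ?_⟩, ?_⟩
  · -- not obscured
    rintro (h01 | ⟨j, k, hj, hk1, hk2, hkj, hkj1, hmem⟩)
    · have h01' : cg (tChain F (1/2)) 0 = cg (tChain F (1/2)) 1 := h01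
      rw [cg_tChain_zero, cg_tChain F (1/2) 1 le_rfl (by omega)] at h01'
      have hz : pt (-1) 0 = (0 : Pt) := by
        have := add_eq_left.mp h01'
        exact this
      have hc := ((pt_eq_zero_iff _).mp hz).1
      simp [pt] at hc
    · have hc : cg (tChain F (1/2)) k ∈ mirror F k := cg_mem_mirror hN F hF k hk1 hk2
      have hray := hNO j hj (1/2) (by norm_num) k hk1 hk2 hkj hkj1
      rw [eq_empty_iff_forall_notMem] at hray
      exact hray _ ⟨hmem, hc⟩
  · -- not grazing
    rintro ⟨i, hi1, hi2, hmem⟩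
    obtain ⟨α, β, hα, hβ, hαβ, hx⟩ := hmem
    have hcore := reflex_core hN F hF i hi1 hi2
    set nn := normalOf (cg F.2 i - cg F.1 i) with hnn
    rw [dot_sub_left, dot_sub_left] at hcore
    have hdots : dot (cg (tChain F (1/2)) i) nn =
        α * dot (cg (tChain F (1/2)) (i-1)) nn + β * dot (cg (tChain F (1/2)) (i+1)) nn := by
      have hx' : α • cg (tChain F (1/2)) (i-1) + β • cg (tChain F (1/2)) (i+1)
          = cg (tChain F (1/2)) i := hx
      rw [← hx', dot_add_left, dot_smul_left, dot_smul_left]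
    rw [hdots] at hcore
    have e1 : dot (cg (tChain F (1/2)) (i+1)) nn -
        (α * dot (cg (tChain F (1/2)) (i-1)) nn + β * dot (cg (tChain F (1/2)) (i+1)) nn) =
        α * (dot (cg (tChain F (1/2)) (i+1)) nn - dot (cg (tChain F (1/2)) (i-1)) nn) := by
      linear_combination (-(dot (cg (tChain F (1/2)) (i+1)) nn)) * hαβ
    have e2 : dot (cg (tChain F (1/2)) (i-1)) nn -
        (α * dot (cg (tChain F (1/2)) (i-1)) nn + β * dot (cg (tChain F (1/2)) (i+1)) nn) =
        β * (dot (cg (tChain F (1/2)) (i-1)) nn - dot (cg (tChain F (1/2)) (i+1)) nn) := by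
      linear_combination (-(dot (cg (tChain F (1/2)) (i-1)) nn)) * hαβ
    rw [e1, e2] at hcore
    nlinarith [hcore, mul_pos hα hβ,
      sq_nonneg (dot (cg (tChain F (1/2)) (i+1)) nn - dot (cg (tChain F (1/2)) (i-1)) nn)]
  · -- reflexive
    intro j h1 h2
    have hθ : θg (MR F).2 j = angleOf (cg F.1 j - cg F.2 j) := by
      simp only [MR, θg]
      rw [dif_pos (show j - 1 < N by omega)]
      rw [Nat.sub_add_cancel h1]
    rw [hθ]
    have hv : cg F.1 j - cg F.2 j ≠ 0 := sub_ne_zero.mpr (hF.1.1 j h1 h2)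
    rw [prod_nvec_eq _ _ _ hv, neg_sub]
    exact reflex_core hN F hF j h1 h2
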